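/- arXiv:2411.10977 — 2 statements merged into one kernel-verified Lean document; each statement's English description precedes it below -/
import Mathlib

section
/- Let $0<\lambda\le 1$ and let $N_1\ge 1$, $N_2\ge 2$ be real numbers such that either $N_2^2\ge 100\,\lambda(N_1+N_2)$ or $100\,N_2^2\le \lambda N_1$. Then for all real numbers $\xi_1,\xi_2,\tau_1,\tau_2$ with $N_1\le|\xi_1|\le 2N_1$ and $N_2\le|\xi_2|\le 2N_2$, writing $\xi=\xi_1+\xi_2$ and $\tau=\tau_1+\tau_2$, one has $|\tau_1+\lambda\xi_1^2|+|\tau_2-\xi_2^3|+|\tau+\lambda\xi^2|\ \ge\ \tfrac12\,N_2\,\max\{N_2^2,\lambda N_1\}$. -/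
/-- **Nonresonance lower bound** for the Schrödinger–KdV bilinear interaction:
if `0 < λ ≤ 1`, `N₁ ≥ 1`, `N₂ ≥ 2` and either `N₂² ≥ 100 λ (N₁+N₂)` or
`100 N₂² ≤ λ N₁`, then for frequencies `|ξ₁| ∈ [N₁, 2N₁]`, `|ξ₂| ∈ [N₂, 2N₂]`
and any `τ₁, τ₂`, with `ξ = ξ₁+ξ₂`, `τ = τ₁+τ₂`, one has
`|τ₁+λξ₁²| + |τ₂-ξ₂³| + |τ+λξ²| ≥ (1/2) N₂ max{N₂², λN₁}`. -/
theorem stmt0 (lam N1 N2 : ℝ) (hlam0 : 0 < lam) (hlam1 : lam ≤ 1)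
    (hN1 : 1 ≤ N1) (hN2 : 2 ≤ N2)
    (hcase : N2 ^ 2 ≥ 100 * lam * (N1 + N2) ∨ 100 * N2 ^ 2 ≤ lam * N1)
    (ξ1 ξ2 τ1 τ2 : ℝ)
    (h1l : N1 ≤ |ξ1|) (h1u : |ξ1| ≤ 2 * N1)
    (h2l : N2 ≤ |ξ2|) (h2u : |ξ2| ≤ 2 * N2) :
    |τ1 + lam * ξ1 ^ 2| + |τ2 - ξ2 ^ 3| + |(τ1 + τ2) + lam * (ξ1 + ξ2) ^ 2|
      ≥ (1 / 2) * N2 * max (N2 ^ 2) (lam * N1) := by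
  -- the resonance function
  have hkey : |ξ2| * |lam * (2 * ξ1 + ξ2) + ξ2 ^ 2|
      ≤ |τ1 + lam * ξ1 ^ 2| + |τ2 - ξ2 ^ 3| + |(τ1 + τ2) + lam * (ξ1 + ξ2) ^ 2| := by
    have hid : ξ2 * (lam * (2 * ξ1 + ξ2) + ξ2 ^ 2)
        = -(((τ1 + lam * ξ1 ^ 2) + (τ2 - ξ2 ^ 3)) - ((τ1 + τ2) + lam * (ξ1 + ξ2) ^ 2)) := by
      ring
    have h1 := abs_add_le ((τ1 + lam * ξ1 ^ 2) + (τ2 - ξ2 ^ 3))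
        (-((τ1 + τ2) + lam * (ξ1 + ξ2) ^ 2))
    have h2 := abs_add_le (τ1 + lam * ξ1 ^ 2) (τ2 - ξ2 ^ 3)
    rw [abs_neg] at h1
    rw [← abs_mul, hid, abs_neg, sub_eq_add_neg]
    linarith
  -- |2ξ1 + ξ2| bounds
  have habs2 : |2 * ξ1 + ξ2| ≤ 2 * |ξ1| + |ξ2| := by
    calc |2 * ξ1 + ξ2| ≤ |2 * ξ1| + |ξ2| := abs_add_le _ _
      _ = 2 * |ξ1| + |ξ2| := by rw [abs_mul]; norm_num
  have habs2' : 2 * |ξ1| - |ξ2| ≤ |2 * ξ1 + ξ2| := by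
    have h := abs_add_le (2 * ξ1 + ξ2) (-ξ2)
    rw [add_neg_cancel_right, abs_neg, abs_mul] at h
    have : |(2:ℝ)| = 2 := by norm_num
    rw [this] at h
    linarith
  have hlamabs : |lam * (2 * ξ1 + ξ2)| = lam * |2 * ξ1 + ξ2| := by
    rw [abs_mul, abs_of_pos hlam0]
  have hξ2sq : N2 ^ 2 ≤ ξ2 ^ 2 := by nlinarith [abs_nonneg ξ2, sq_abs ξ2]
  have hξ2sq' : ξ2 ^ 2 ≤ 4 * N2 ^ 2 := by nlinarith [abs_nonneg ξ2, sq_abs ξ2]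
  rcases hcase with hc | hc
  · -- Case 1: N₂² ≥ 100 λ (N₁+N₂)
    have hmax : max (N2 ^ 2) (lam * N1) = N2 ^ 2 := by
      apply max_eq_left
      nlinarith [mul_pos hlam0 (by linarith : (0:ℝ) < N2)]
    have hsmall : lam * |2 * ξ1 + ξ2| ≤ (1/25) * ξ2 ^ 2 := by
      have : lam * |2 * ξ1 + ξ2| ≤ lam * (4 * N1 + 2 * N2) := by
        apply mul_le_mul_of_nonneg_left _ hlam0.le
        linarith
      nlinarith
    have hlow : (24/25) * N2 ^ 2 ≤ |lam * (2 * ξ1 + ξ2) + ξ2 ^ 2| := by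
      have hneg := neg_abs_le (lam * (2 * ξ1 + ξ2))
      rw [hlamabs] at hneg
      have := le_abs_self (lam * (2 * ξ1 + ξ2) + ξ2 ^ 2)
      linarith
    have hprod : N2 * ((24/25) * N2 ^ 2) ≤ |ξ2| * |lam * (2 * ξ1 + ξ2) + ξ2 ^ 2| := by
      have h0' : (0:ℝ) ≤ (24/25) * N2 ^ 2 := by positivity
      exact mul_le_mul h2l hlow h0' (abs_nonneg ξ2)
    rw [hmax]
    nlinarith [hkey, hprod, sq_nonneg N2]
  · -- Case 2: 100 N₂² ≤ λ N₁
    have hN1big : 100 * N2 ^ 2 ≤ N1 := by nlinarith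
    have hmax : max (N2 ^ 2) (lam * N1) = lam * N1 := by
      apply max_eq_right; linarith
    have hlow : lam * N1 ≤ |lam * (2 * ξ1 + ξ2) + ξ2 ^ 2| := by
      have h := abs_add_le (lam * (2 * ξ1 + ξ2) + ξ2 ^ 2) (-(ξ2 ^ 2))
      rw [add_neg_cancel_right, abs_neg, abs_of_nonneg (sq_nonneg ξ2), hlamabs] at h
      have hx : 2 * N1 - 2 * N2 ≤ |2 * ξ1 + ξ2| := by linarith
      have hge : lam * (2 * N1 - 2 * N2) ≤ lam * |2 * ξ1 + ξ2| :=
        mul_le_mul_of_nonneg_left hx hlam0.le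
      have h2N2 : lam * N2 ≤ N2 ^ 2 := by nlinarith
      linarith
    have hprod : N2 * (lam * N1) ≤ |ξ2| * |lam * (2 * ξ1 + ξ2) + ξ2 ^ 2| := by
      have h0' : (0:ℝ) ≤ lam * N1 := by positivity
      exact mul_le_mul h2l hlow h0' (abs_nonneg ξ2)
    rw [hmax]
    have hpos : (0:ℝ) ≤ N2 * (lam * N1) := by positivity
    linarith [hkey, hprod]
end

section
/- There exist absolute constants $\epsilon_0\in(0,1)$ and $C_0\ge 1$ with the following property. For all $0<\lambda\le 1$, all $N\ge 2$, and all intervals $I_1,I_2\subset[-4N^2/\lambda,\,-N^2/(4\lambda)]$ each of length at most $\epsilon_0 N$, there exists $\xi_0\ge 0$ such that: for every $\xi\in\mathbb{R}$ with $N/2\le|\xi|\le 2N$ and $\big||\xi|-\xi_0\big|\ge 1$, and every $\eta_1\in I_1$, $\eta_2\in I_2$ with $\eta_1-\eta_2=\xi$, one has $|\xi^3+\lambda\eta_1^2-\lambda\eta_2^2|\ge N^2/C_0$. -/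
noncomputable section

open MeasureTheory Set
open scoped ENNReal

namespace SKdV

/-- Fourier transform on `ℝ`, convention `f̂(ξ) = ∫ e^{-ixξ} f(x) dx`. -/
def FT (f : ℝ → ℂ) (ξ : ℝ) : ℂ :=
  ∫ x : ℝ, Complex.exp (-(Complex.I * (x : ℂ) * (ξ : ℂ))) * f x

/-- Inverse Fourier transform on `ℝ`. -/
def IFT (g : ℝ → ℂ) (x : ℝ) : ℂ :=
  (1 / (2 * Real.pi)) * ∫ ξ : ℝ, Complex.exp (Complex.I * (x : ℂ) * (ξ : ℂ)) * g ξ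

/-- Free Schrödinger wave `S_λ(t)u₀` written in terms of the Fourier data
`f = û₀`: `S_λ(t)u₀(x) = (2π)⁻¹ ∫ e^{i(xξ - λtξ²)} f(ξ) dξ`. -/
def Sfree (lam : ℝ) (f : ℝ → ℂ) (t x : ℝ) : ℂ :=
  (1 / (2 * Real.pi)) *
    ∫ ξ : ℝ, Complex.exp (Complex.I * ((x * ξ - lam * t * ξ ^ 2 : ℝ) : ℂ)) * f ξ

/-- Free Airy wave `K(t)v₀` written in terms of the Fourier data `g = v̂₀`:
`K(t)v₀(x) = (2π)⁻¹ ∫ e^{i(xξ + tξ³)} g(ξ) dξ`. -/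
def Kfree (g : ℝ → ℂ) (t x : ℝ) : ℂ :=
  (1 / (2 * Real.pi)) *
    ∫ ξ : ℝ, Complex.exp (Complex.I * ((x * ξ + t * ξ ^ 3 : ℝ) : ℂ)) * g ξ

/-- Airy Duhamel operator `𝓑(f)(t) = ∫₀ᵗ K(t-s) ∂ₓ f(s) ds`. -/
def Duhamel (f : ℝ → ℝ → ℂ) (t x : ℝ) : ℂ :=
  ∫ s in (0:ℝ)..t, Kfree (fun ξ => Complex.I * (ξ : ℂ) * FT (f s) ξ) (t - s) x

/-- `F[u₀](t) = η(t) 𝓑(|S_λ(·)u₀|²)(t)`, in terms of the Fourier data `f = û₀`. -/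
def Fop (eta : ℝ → ℝ) (lam : ℝ) (f : ℝ → ℂ) (t x : ℝ) : ℂ :=
  (eta t : ℂ) * Duhamel (fun s y => ((‖Sfree lam f s y‖ : ℝ) : ℂ) ^ 2) t x

/-- Fourier multiplier operator with symbol `m`. -/
def Pmul (m : ℝ → ℝ) (f : ℝ → ℂ) : ℝ → ℂ :=
  IFT fun ξ => (m ξ : ℂ) * FT f ξ

/-- Littlewood–Paley symbol `ψ_N(ξ) = φ(ξ/N) - φ(2ξ/N)`. -/
def psi (φ : ℝ → ℝ) (N : ℝ) (ξ : ℝ) : ℝ := φ (ξ / N) - φ (2 * ξ / N)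

/-- A smooth bump: `φ ∈ C₀^∞`, `φ = 1` on `[-1,1]`, `supp φ ⊆ [-2,2]`. -/
def IsBump (φ : ℝ → ℝ) : Prop :=
  ContDiff ℝ (⊤ : ℕ∞) φ ∧ HasCompactSupport φ ∧
    (∀ x ∈ Set.Icc (-1 : ℝ) 1, φ x = 1) ∧ (∀ x, x ∉ Set.Icc (-2 : ℝ) 2 → φ x = 0)

/-- A dyadic number `N ∈ {1,2,4,8,…}`. -/
def IsDyadic (N : ℝ) : Prop := ∃ k : ℕ, N = 2 ^ k

/-- Mixed norm `‖F‖_{L^p_x L^q_t}` of `F = F(t,x)`. -/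
def mixedNorm (p q : ℝ≥0∞) (F : ℝ → ℝ → ℂ) : ℝ≥0∞ :=
  eLpNorm (fun x => (eLpNorm (fun t => F t x) q volume).toReal) p volume

/-- `L²` norm over space-time `ℝ²_{t,x}` of `F = F(t,x)`. -/
def stL2 (F : ℝ → ℝ → ℂ) : ℝ≥0∞ :=
  eLpNorm (fun p : ℝ × ℝ => F p.1 p.2) 2 volume

/-- Sobolev `H^s` norm in terms of the Fourier data `f = û`. -/
def HsNorm (s : ℝ) (f : ℝ → ℂ) : ℝ≥0∞ :=
  eLpNorm (fun ξ => (((1 + ξ ^ 2 : ℝ) ^ (s / 2) : ℝ) : ℂ) * f ξ) 2 volume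

/-- Space-time Fourier transform of `v = v(t,x)`. -/
def stFT (v : ℝ → ℝ → ℂ) (τ ξ : ℝ) : ℂ :=
  ∫ t : ℝ, ∫ x : ℝ, Complex.exp (-(Complex.I * ((t * τ + x * ξ : ℝ) : ℂ))) * v t x

end SKdV

open SKdV Set

/-- **Exceptional-interval decomposition for the resonance function.** There
are absolute `ε₀ ∈ (0,1)` and `C₀ ≥ 1` such that for all `0 < λ ≤ 1`, `N ≥ 2`
and intervals `I₁ = [a₁,b₁]`, `I₂ = [a₂,b₂] ⊆ [-4N²/λ, -N²/(4λ)]` of length at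
most `ε₀N`, there is `ξ₀ ≥ 0` with: whenever `N/2 ≤ |ξ| ≤ 2N`, `||ξ| - ξ₀| ≥ 1`,
`η₁ ∈ I₁`, `η₂ ∈ I₂` and `η₁ - η₂ = ξ`, then
`|ξ³ + λη₁² - λη₂²| ≥ N²/C₀`. -/
theorem stmt3 :
    ∃ ε0 : ℝ, ε0 ∈ Set.Ioo (0 : ℝ) 1 ∧
      ∃ C0 : ℝ, 1 ≤ C0 ∧
        ∀ (lam N : ℝ), 0 < lam → lam ≤ 1 → 2 ≤ N →
          ∀ a1 b1 a2 b2 : ℝ,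
            b1 - a1 ≤ ε0 * N → b2 - a2 ≤ ε0 * N →
            Set.Icc a1 b1 ⊆ Set.Icc (-4 * N ^ 2 / lam) (-N ^ 2 / (4 * lam)) →
            Set.Icc a2 b2 ⊆ Set.Icc (-4 * N ^ 2 / lam) (-N ^ 2 / (4 * lam)) →
            ∃ ξ0 : ℝ, 0 ≤ ξ0 ∧
              ∀ ξ η1 η2 : ℝ,
                N / 2 ≤ |ξ| → |ξ| ≤ 2 * N → 1 ≤ |abs ξ - ξ0| →
                η1 ∈ Set.Icc a1 b1 → η2 ∈ Set.Icc a2 b2 → η1 - η2 = ξ →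
                N ^ 2 / C0 ≤ |ξ ^ 3 + lam * η1 ^ 2 - lam * η2 ^ 2| := by
  refine ⟨1/8, ⟨by norm_num, by norm_num⟩, 8, by norm_num, ?_⟩
  intro lam N hlam hlam1 hN a1 b1 a2 b2 hlen1 hlen2 hsub1 hsub2
  refine ⟨Real.sqrt (-(lam * (a1 + a2))), Real.sqrt_nonneg _, ?_⟩
  intro ξ η1 η2 hξl hξu hsep hη1 hη2 heq
  set ξ0 := Real.sqrt (-(lam * (a1 + a2))) with hξ0def
  have hN0 : (0 : ℝ) < N := by linarith
  have ha1 : a1 ∈ Set.Icc (-4 * N ^ 2 / lam) (-N ^ 2 / (4 * lam)) :=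
    hsub1 ⟨le_refl a1, hη1.1.trans hη1.2⟩
  have ha2 : a2 ∈ Set.Icc (-4 * N ^ 2 / lam) (-N ^ 2 / (4 * lam)) :=
    hsub2 ⟨le_refl a2, hη2.1.trans hη2.2⟩
  have hlamne : lam ≠ 0 := ne_of_gt hlam
  have h1 : lam * a1 ≤ -N ^ 2 / 4 := by
    have h := mul_le_mul_of_nonneg_left ha1.2 hlam.le
    have he : lam * (-N ^ 2 / (4 * lam)) = -N ^ 2 / 4 := by
      field_simp
    linarith [he ▸ h]
  have h2 : lam * a2 ≤ -N ^ 2 / 4 := by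
    have h := mul_le_mul_of_nonneg_left ha2.2 hlam.le
    have he : lam * (-N ^ 2 / (4 * lam)) = -N ^ 2 / 4 := by
      field_simp
    linarith [he ▸ h]
  have hpos : 0 ≤ -(lam * (a1 + a2)) := by nlinarith
  have hsq : ξ0 ^ 2 = -(lam * (a1 + a2)) := Real.sq_sqrt hpos
  have hξ0nn : 0 ≤ ξ0 := Real.sqrt_nonneg _
  -- the perturbation term
  set D := lam * ((η1 - a1) + (η2 - a2)) with hDdef
  have hD0 : 0 ≤ D := by
    have := hη1.1
    have := hη2.1
    nlinarith
  have hDle : D ≤ N / 4 := by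
    have hb1 : η1 - a1 ≤ 1/8 * N := by
      have := hη1.2; linarith
    have hb2 : η2 - a2 ≤ 1/8 * N := by
      have := hη2.2; linarith
    nlinarith
  -- factor
  have hrw : ξ ^ 3 + lam * η1 ^ 2 - lam * η2 ^ 2 = ξ * (ξ ^ 2 + lam * (η1 + η2)) := by
    rw [← heq]; ring
  set s := ξ ^ 2 - ξ0 ^ 2 with hsdef
  have hA : ξ ^ 2 + lam * (η1 + η2) = s + D := by
    rw [hsdef, hsq]; ring
  have hs_abs : N / 2 ≤ |s| := by
    have hfac : s = (|ξ| - ξ0) * (|ξ| + ξ0) := by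
      rw [hsdef, ← sq_abs ξ]; ring
    rw [hfac, abs_mul, abs_of_nonneg (by positivity : (0:ℝ) ≤ |ξ| + ξ0)]
    have h1' : (1 : ℝ) ≤ |(|ξ| - ξ0)| := hsep
    nlinarith [abs_nonneg ξ]
  have hAabs : N / 4 ≤ |s + D| := by
    rcases abs_cases s with ⟨h, h'⟩ | ⟨h, h'⟩ <;>
      rcases abs_cases (s + D) with ⟨g, g'⟩ | ⟨g, g'⟩ <;> linarith
  rw [hrw, abs_mul, hA]
  calc N ^ 2 / 8 = (N / 2) * (N / 4) := by ring
    _ ≤ |ξ| * |s + D| :=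
      mul_le_mul hξl hAabs (by linarith) (abs_nonneg _)
end
end
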